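/- For every real $t$ and real $x$, $e^{-it\cos x} = \sum_{k=-\infty}^{\infty} (-i)^k J_k(t)\, e^{ikx}$, where $J_k$ denotes the Bessel function of the first kind of order $k$, and the series converges absolutely. -/

import Mathlib

/-- The Bessel function of the first kind of nonnegative integer order `k`:
`J_k(t) = ∑_{m=0}^∞ (-1)^m / (m! (m+k)!) (t/2)^{2m+k}`. -/
noncomputable def besselJnn (k : ℕ) (t : ℝ) : ℝ :=
  ∑' m : ℕ, ((-1 : ℝ) ^ m / ((m.factorial : ℝ) * ((m + k).factorial : ℝ))) * (t / 2) ^ (2 * m + k)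

/-- The Bessel function of the first kind of integer order, with `J_{-k} = (-1)^k J_k`. -/
noncomputable def besselJ (k : ℤ) (t : ℝ) : ℝ :=
  if 0 ≤ k then besselJnn k.natAbs t else (-1 : ℝ) ^ k.natAbs * besselJnn k.natAbs t

/-!
Multiplying the exponential series of `s u` and `-s / u`, with `s = t / 2`, and grouping the terms
`(s u) ^ n (-s / u) ^ n' / (n! n'!)` according to `k = n - n'` gives the generating function
`exp (s (u - u⁻¹)) = ∑ₖ J_k(t) u ^ k` for every `u ≠ 0`. The double series converges absolutely,
which justifies the regrouping and makes the resulting series absolutely convergent. At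
`u = -i e^{ix}` one has `s (u - u⁻¹) = -i t cos x` and `u ^ k = (-i) ^ k e^{ikx}`.
-/

open Complex Nat

theorem HasSum.prod_tsum_and_summable_norm {β γ E : Type*} [NormedAddCommGroup E]
    [CompleteSpace E] {f : β × γ → E} {a : E} (hf : HasSum f a)
    (hnorm : Summable fun p => ‖f p‖) :
    HasSum (fun b => ∑' c, f (b, c)) a ∧ Summable fun b => ‖∑' c, f (b, c)‖ := by
  refine ⟨hf.prod_fiberwise fun b => (hf.summable.prod_factor b).hasSum, ?_⟩
  exact hnorm.prod.of_nonneg_of_le (fun _ => norm_nonneg _)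
    fun b => norm_tsum_le_tsum_norm (hnorm.prod_factor b)

theorem hasSum_exp_mul_exp_prod (a b : ℂ) :
    HasSum (fun q : ℕ × ℕ => a ^ q.1 / q.1 ! * (b ^ q.2 / q.2 !)) (exp a * exp b) ∧
      Summable fun q : ℕ × ℕ => ‖a ^ q.1 / q.1 ! * (b ^ q.2 / q.2 !)‖ := by
  have hasSum_exp (z : ℂ) : HasSum (fun n => z ^ n / n !) (exp z) := by
    rw [exp_eq_exp_ℂ]; exact NormedSpace.expSeries_div_hasSum_exp z
  have hnorm := (NormedSpace.norm_expSeries_div_summable a).mul_norm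
    (NormedSpace.norm_expSeries_div_summable b)
  have hsum := (hasSum_exp a).mul (hasSum_exp b) hnorm.of_norm
  exact ⟨hsum, hnorm⟩

def intProdNatEquivNatProd : ℤ × ℕ ≃ ℕ × ℕ where
  toFun p := (p.2 + p.1.toNat, p.2 + (-p.1).toNat)
  invFun q := (q.1 - q.2, min q.1 q.2)
  left_inv := by
    rintro ⟨k, m⟩
    simp only [Prod.mk.injEq]
    omega
  right_inv := by
    rintro ⟨n, n'⟩
    simp only [Prod.mk.injEq]
    omega

/-- The coefficient of `u ^ k` contributed by the pair `(m + k⁺, m + k⁻)` of exponents; its sum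
over `m` is `J_k` for either sign of `k`. -/
noncomputable def besselJTerm (k : ℤ) (t : ℝ) (m : ℕ) : ℝ :=
  (-1) ^ (m + (-k).toNat) / ((m + k.toNat)! * (m + (-k).toNat)!) * (t / 2) ^ (2 * m + k.natAbs)

theorem besselJ_natCast (k : ℕ) (t : ℝ) : besselJ k t = besselJnn k t := by
  simp only [besselJ, cast_nonneg, ↓reduceIte, Int.natAbs_natCast]

theorem besselJ_neg_natCast (k : ℕ) (t : ℝ) : besselJ (-k) t = (-1) ^ k * besselJnn k t := by
  rw [besselJ, Int.natAbs_neg, Int.natAbs_natCast]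
  split_ifs with hk
  · obtain rfl : k = 0 := by omega
    simp
  · rfl

theorem tsum_besselJTerm (k : ℤ) (t : ℝ) : ∑' m, besselJTerm k t m = besselJ k t := by
  obtain ⟨k, rfl | rfl⟩ := Int.eq_nat_or_neg k
  · simp only [besselJ_natCast, besselJnn, besselJTerm]
    congr 1 with m
    simp only [Int.toNat_neg_natCast, add_zero, Int.toNat_natCast, mul_comm, Int.natAbs_natCast]
  · rw [besselJ_neg_natCast, besselJnn, ← tsum_mul_left]
    congr 1 with m
    simp only [besselJTerm, neg_neg, Int.toNat_natCast, pow_add, Int.toNat_neg_natCast, add_zero,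
      Int.natAbs_neg, Int.natAbs_natCast]
    ring

theorem pow_div_factorial_mul_pow_div_factorial (s : ℂ) {u : ℂ} (hu : u ≠ 0) (k : ℤ) (m : ℕ) :
    (s * u) ^ (m + k.toNat) / (m + k.toNat)! * ((-s * u⁻¹) ^ (m + (-k).toNat) / (m + (-k).toNat)!)
      = (-1) ^ (m + (-k).toNat) / ((m + k.toNat)! * (m + (-k).toNat)!)
          * s ^ (2 * m + k.natAbs) * u ^ k := by
  have hs : s ^ (m + k.toNat) * s ^ (m + (-k).toNat) = s ^ (2 * m + k.natAbs) := by
    rw [← pow_add]; congr 1; omega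
  have hu : u ^ (m + k.toNat) * u⁻¹ ^ (m + (-k).toNat) = u ^ k := by
    rw [← zpow_natCast, ← zpow_natCast, inv_zpow', ← zpow_add₀ hu]; congr 1; omega
  rw [neg_mul, neg_pow, mul_pow, mul_pow, ← hs, ← hu]
  field_simp

theorem hasSum_besselJ_mul_zpow (t : ℝ) {u : ℂ} (hu : u ≠ 0) :
    HasSum (fun k : ℤ => (besselJ k t : ℂ) * u ^ k) (exp (t / 2 * (u - u⁻¹))) ∧
      Summable fun k : ℤ => ‖(besselJ k t : ℂ) * u ^ k‖ := by
  obtain ⟨hsum, hnorm⟩ := hasSum_exp_mul_exp_prod (t / 2 * u) (-(t / 2) * u⁻¹)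
  rw [← intProdNatEquivNatProd.hasSum_iff] at hsum
  rw [← intProdNatEquivNatProd.summable_iff] at hnorm
  have hfiber (k : ℤ) : ∑' m, (t / 2 * u) ^ (m + k.toNat) / (m + k.toNat)!
      * ((-(t / 2) * u⁻¹) ^ (m + (-k).toNat) / (m + (-k).toNat)!) = (besselJ k t : ℂ) * u ^ k := by
    rw [← tsum_besselJTerm, ofReal_tsum, ← tsum_mul_right]
    congr 1 with m
    rw [pow_div_factorial_mul_pow_div_factorial _ hu, besselJTerm]
    push_cast
    ring
  rw [show t / 2 * (u - u⁻¹) = (t / 2 * u : ℂ) + -(t / 2) * u⁻¹ by ring, exp_add]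
  simpa only [Function.comp_def, intProdNatEquivNatProd, Equiv.coe_fn_mk, hfiber]
    using hsum.prod_tsum_and_summable_norm hnorm

/-- The Jacobi–Anger expansion: for all real `t` and `x`,
`e^{-it cos x} = ∑_{k=-∞}^{∞} (-i)^k J_k(t) e^{ikx}`, with absolute convergence. -/
theorem jacobi_anger (t x : ℝ) :
    HasSum (fun k : ℤ =>
        (-Complex.I) ^ k * ((besselJ k t : ℝ) : ℂ) * Complex.exp (Complex.I * (k : ℂ) * (x : ℂ)))
      (Complex.exp (-Complex.I * (t : ℂ) * ((Real.cos x : ℝ) : ℂ))) ∧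
    Summable (fun k : ℤ =>
      ‖(-Complex.I) ^ k * ((besselJ k t : ℝ) : ℂ) *
        Complex.exp (Complex.I * (k : ℂ) * (x : ℂ))‖) := by
  set u := -I * exp (I * x) with hu_def
  have hu : u ≠ 0 := mul_ne_zero (neg_ne_zero.mpr I_ne_zero) (exp_ne_zero _)
  have hexponent : t / 2 * (u - u⁻¹) = -I * t * (Real.cos x : ℂ) := by
    rw [ofReal_cos, cos, hu_def, mul_inv, inv_neg, inv_I, ← exp_neg]
    ring_nf
  have hterm (k : ℤ) :
      (-I) ^ k * (besselJ k t : ℂ) * exp (I * k * x) = besselJ k t * u ^ k := by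
    rw [hu_def, mul_zpow, ← exp_int_mul]
    ring_nf
  simp only [hterm, ← hexponent]
  exact hasSum_besselJ_mul_zpow t hu
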